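/- (Corollary 6.) Under Assumption 1 and the stratification setup, assume condition (U): E_jk(ε_jk | S) = δ_jk and E_jk(ε_kj | S) = δ_kj almost surely. Then: (a) λ_jk = E_jk[λ_jk(S)] + Var_jk( E_jk(Y^(j)|S) ), where λ_jk(S) = Var_jk(Y^(j)|S) − Var_jk(ε_jk|S) (and analogously for λ_kj); (b) c_jk = E_jk[c_jk(S)] + Cov_jk( E_jk(Y^(j)|S), E_jk(Y^(k)|S) ), where c_jk(S) = Cov_jk(Y^(j),Y^(k)|S) − Cov_jk(ε_jk,ε_kj|S); (c) E_jk[(ε_jk − δ_jk)²/π_j(S)] = E_jk[Var_jk(ε_jk|S)/π_j(S)] (and analogously with k); consequently Σ_saipw = Σ_aps, where Σ_saipw = diag( E_jk[(ε_jk−δ_jk)²/π_j(S)], E_jk[(ε_kj−δ_kj)²/π_k(S)] ) + Λ_jk with Λ_jk having diagonal (λ_jk, λ_kj) and off-diagonal entries c_jk, and Σ_aps = E_jk[ diag( Var_jk(ε_jk|S)/π_j(S), Var_jk(ε_kj|S)/π_k(S) ) + Λ_jk(S) ] + Γ_jk with Λ_jk(S) having diagonal (λ_jk(S), λ_kj(S))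 and off-diagonal c_jk(S), and Γ_jk the ECE-conditional covariance matrix of (E_jk(Y^(j)|S), E_jk(Y^(k)|S)). -/

import Mathlib

open MeasureTheory ProbabilityTheory Filter Set

noncomputable section

/-- Covariance of two real-valued random variables under the measure `μ`. -/
def cov {Ω : Type*} [MeasurableSpace Ω] (μ : Measure Ω) (f g : Ω → ℝ) : ℝ :=
  ∫ ω, (f ω - ∫ x, f x ∂μ) * (g ω - ∫ x, g x ∂μ) ∂μ

/-- The conditional mean `E_μ(f | S)` of `f` given a finitely-valued variable `S`,
as a function on the sample space. -/
def condMeanOn {Ω 𝓢 : Type*} [MeasurableSpace Ω] (μ : Measure Ω) (S : Ω → 𝓢) (f : Ω → ℝ) :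
    Ω → ℝ :=
  fun ω => ∫ x, f x ∂μ[|{ω' | S ω' = S ω}]

/-- The conditional variance `Var_μ(f | S)` of `f` given `S`, as a function on the
sample space. -/
def condVarOn {Ω 𝓢 : Type*} [MeasurableSpace Ω] (μ : Measure Ω) (S : Ω → 𝓢) (f : Ω → ℝ) :
    Ω → ℝ :=
  fun ω => ProbabilityTheory.variance f μ[|{ω' | S ω' = S ω}]

/-- The conditional covariance `Cov_μ(f, g | S)` of `f` and `g` given `S`, as a function on
the sample space. -/
def condCovOn {Ω 𝓢 : Type*} [MeasurableSpace Ω] (μ : Measure Ω) (S : Ω → 𝓢) (f g : Ω → ℝ) :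
    Ω → ℝ :=
  fun ω => cov μ[|{ω' | S ω' = S ω}] f g

/-! Since `S` takes finitely many values, `condMeanOn μ S f` is a simple function of `S`, and
splitting integrals over the fibres of `S` gives the tower property `∫ E(f | S) = ∫ f`.
Writing covariances as `E[fg] - E[f] E[g]`, valid for every zero-or-probability measure and hence
also on null strata, this yields the laws of total covariance and variance. Under (U) the
conditional means of the residuals are a.s. constant, so their (co)variances vanish: this is
(a) and (b). For (c), `π_j(Z)` is constant on strata and can be pulled out of
`E((ε - δ)² / π_j(Z) | S)`, which is then `Var(ε | S) / π_j(Z)` wherever `E(ε | S) = δ`. -/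

open scoped ENNReal

section Moments

variable {Ω : Type*} [MeasurableSpace Ω] {μ : Measure Ω} {f g : Ω → ℝ}

lemma MeasureTheory.MemLp.cond {p : ℝ≥0∞} (hf : MemLp f p μ) (s : Set Ω) : MemLp f p μ[|s] := by
  by_cases hs : μ s = 0
  · simp [cond_eq_zero_of_meas_eq_zero hs]
  · exact (hf.restrict s).smul_measure (ENNReal.inv_ne_top.2 hs)

lemma cov_eq_sub [IsZeroOrProbabilityMeasure μ] (hf : MemLp f 2 μ) (hg : MemLp g 2 μ) :
    cov μ f g = ∫ x, f x * g x ∂μ - (∫ x, f x ∂μ) * ∫ x, g x ∂μ := by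
  rcases eq_zero_or_isProbabilityMeasure μ with rfl | _
  · simp [cov]
  · exact covariance_eq_sub hf hg

lemma cov_self (hf : AEMeasurable f μ) : cov μ f f = variance f μ :=
  covariance_self hf

lemma cov_eq_zero_of_ae_eq_const [IsZeroOrProbabilityMeasure μ] {c : ℝ}
    (hf : ∀ᵐ x ∂μ, f x = c) (g : Ω → ℝ) : cov μ f g = 0 := by
  rcases eq_zero_or_isProbabilityMeasure μ with rfl | _
  · simp [cov]
  · have hmean : μ[f] = c := by simp [integral_congr_ae hf]
    refine integral_eq_zero_of_ae ?_
    filter_upwards [hf] with x hx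
    simp [hx, hmean]

lemma variance_eq_zero_of_ae_eq_const [IsZeroOrProbabilityMeasure μ] {c : ℝ}
    (hf : ∀ᵐ x ∂μ, f x = c) : variance f μ = 0 := by
  rw [← cov_self (aemeasurable_const.congr (Filter.EventuallyEq.symm hf))]
  exact cov_eq_zero_of_ae_eq_const hf f

lemma measureReal_mul_integral_cond [IsFiniteMeasure μ] (s : Set Ω) (f : Ω → ℝ) :
    μ.real s * ∫ x, f x ∂μ[|s] = ∫ x in s, f x ∂μ := by
  by_cases hs : μ s = 0
  · simp [Measure.real, hs, Measure.restrict_eq_zero.2 hs]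
  rw [ProbabilityTheory.cond, integral_smul_measure, smul_eq_mul, ← mul_assoc, Measure.real,
    ENNReal.toReal_inv, mul_inv_cancel₀ (ENNReal.toReal_ne_zero.2 ⟨hs, measure_ne_top μ s⟩),
    one_mul]

end Moments

section Strata

variable {Ω 𝓢 : Type*} [MeasurableSpace Ω] {μ : Measure Ω} {S : Ω → 𝓢} {f g h : Ω → ℝ}

lemma condMeanOn_sq_sub (hf : AEMeasurable f μ) {ω : Ω} {c : ℝ} (hc : condMeanOn μ S f ω = c) :
    condMeanOn μ S (fun x => (f x - c) ^ 2) ω = condVarOn μ S f ω := by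
  rw [condVarOn, variance_eq_integral (hf.mono_ac cond_absolutelyContinuous), ← hc]
  rfl

lemma condCovOn_eq_sub (hf : MemLp f 2 μ) (hg : MemLp g 2 μ) (ω : Ω) :
    condCovOn μ S f g ω =
      condMeanOn μ S (fun x => f x * g x) ω - condMeanOn μ S f ω * condMeanOn μ S g ω :=
  cov_eq_sub (hf.cond _) (hg.cond _)

variable [MeasurableSpace 𝓢] [MeasurableSingletonClass 𝓢]

lemma condMeanOn_div_of_fiberwise_const (hS : Measurable S)
    (hh : ∀ ω ω', S ω = S ω' → h ω = h ω') (ω : Ω) :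
    condMeanOn μ S (fun x => f x / h x) ω = condMeanOn μ S f ω / h ω := by
  rw [condMeanOn, condMeanOn, ← integral_div]
  refine integral_congr_ae ?_
  filter_upwards [ae_cond_mem (hS (measurableSet_singleton (S ω)))] with x hx
  rw [hh x ω hx]

lemma condMeanOn_sq_sub_div_ae_eq (hS : Measurable S) (hf : AEMeasurable f μ)
    (hh : ∀ ω ω', S ω = S ω' → h ω = h ω') {c : ℝ} (hU : ∀ᵐ ω ∂μ, condMeanOn μ S f ω = c) :
    condMeanOn μ S (fun x => (f x - c) ^ 2 / h x) =ᵐ[μ] fun x => condVarOn μ S f x / h x := by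
  filter_upwards [hU] with ω hω
  rw [condMeanOn_div_of_fiberwise_const hS hh, condMeanOn_sq_sub hf hω]

variable [Fintype 𝓢]

lemma integral_eq_sum_setIntegral_fiber (hS : Measurable S) (hf : Integrable f μ) :
    ∫ x, f x ∂μ = ∑ s, ∫ x in {ω | S ω = s}, f x ∂μ := by
  rw [← integral_iUnion_fintype (s := fun s => {ω | S ω = s})
    (fun s => hS (measurableSet_singleton s))
    (fun s t hst => Set.disjoint_left.2 fun x hs ht => hst (hs.symm.trans ht))
    (fun _ => hf.integrableOn), Set.iUnion_eq_univ_iff.2 fun x => ⟨S x, rfl⟩, setIntegral_univ]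

lemma memLp_comp_of_finite [IsFiniteMeasure μ] (hS : Measurable S) (φ : 𝓢 → ℝ) (p : ℝ≥0∞) :
    MemLp (fun ω => φ (S ω)) p μ :=
  MemLp.of_bound ((measurable_of_countable φ).comp hS).aestronglyMeasurable (∑ s, |φ s|)
    (ae_of_all _ fun _ => (Real.norm_eq_abs _).trans_le
      (Finset.single_le_sum (f := fun s => |φ s|) (fun _ _ => abs_nonneg _) (Finset.mem_univ _)))

lemma memLp_condMeanOn [IsFiniteMeasure μ] (hS : Measurable S) (f : Ω → ℝ) (p : ℝ≥0∞) :
    MemLp (condMeanOn μ S f) p μ :=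
  memLp_comp_of_finite hS (fun s => ∫ x, f x ∂μ[|{ω | S ω = s}]) p

lemma integrable_condVarOn [IsFiniteMeasure μ] (hS : Measurable S) (f : Ω → ℝ) :
    Integrable (condVarOn μ S f) μ :=
  (memLp_comp_of_finite hS (fun s => variance f μ[|{ω | S ω = s}]) 1).integrable le_rfl

lemma integrable_condCovOn [IsFiniteMeasure μ] (hS : Measurable S) (f g : Ω → ℝ) :
    Integrable (condCovOn μ S f g) μ :=
  (memLp_comp_of_finite hS (fun s => cov μ[|{ω | S ω = s}] f g) 1).integrable le_rfl

lemma integral_condMeanOn [IsFiniteMeasure μ] (hS : Measurable S) (hf : Integrable f μ) :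
    ∫ x, condMeanOn μ S f x ∂μ = ∫ x, f x ∂μ := by
  rw [integral_eq_sum_setIntegral_fiber hS ((memLp_condMeanOn hS f 1).integrable le_rfl),
    integral_eq_sum_setIntegral_fiber hS hf]
  refine Finset.sum_congr rfl fun s _ => ?_
  calc ∫ x in {ω | S ω = s}, condMeanOn μ S f x ∂μ
      = ∫ _ in {ω | S ω = s}, (∫ y, f y ∂μ[|{ω | S ω = s}]) ∂μ :=
        setIntegral_congr_fun (hS (measurableSet_singleton s)) fun x hx => by
          obtain rfl : S x = s := hx
          rfl
    _ = ∫ x in {ω | S ω = s}, f x ∂μ := by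
      rw [setIntegral_const, smul_eq_mul, measureReal_mul_integral_cond]

lemma cov_eq_integral_condCovOn_add [IsZeroOrProbabilityMeasure μ] (hS : Measurable S)
    (hf : MemLp f 2 μ) (hg : MemLp g 2 μ) :
    cov μ f g = ∫ x, condCovOn μ S f g x ∂μ + cov μ (condMeanOn μ S f) (condMeanOn μ S g) := by
  have hmf := memLp_condMeanOn (μ := μ) hS f 2
  have hmg := memLp_condMeanOn (μ := μ) hS g 2
  have hfg : Integrable (fun x => f x * g x) μ := hf.integrable_mul hg
  have hmfg : Integrable (fun x => condMeanOn μ S f x * condMeanOn μ S g x) μ :=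
    hmf.integrable_mul hmg
  simp_rw [condCovOn_eq_sub hf hg]
  rw [cov_eq_sub hf hg, cov_eq_sub hmf hmg,
    integral_sub ((memLp_condMeanOn hS _ 1).integrable le_rfl) hmfg,
    integral_condMeanOn hS hfg, integral_condMeanOn hS (hf.integrable one_le_two),
    integral_condMeanOn hS (hg.integrable one_le_two)]
  ring

lemma variance_eq_integral_condVarOn_add [IsZeroOrProbabilityMeasure μ] (hS : Measurable S)
    (hf : MemLp f 2 μ) :
    variance f μ = ∫ x, condVarOn μ S f x ∂μ + variance (condMeanOn μ S f) μ := by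
  have hcond : condCovOn μ S f f = condVarOn μ S f :=
    funext fun _ => cov_self (hf.aemeasurable.mono_ac cond_absolutelyContinuous)
  rw [← cov_self hf.aemeasurable, ← cov_self (memLp_condMeanOn hS f 2).aemeasurable, ← hcond]
  exact cov_eq_integral_condCovOn_add hS hf hf

lemma integrable_condVarOn_div [IsFiniteMeasure μ] (hS : Measurable S) (hf : AEMeasurable f μ)
    (hh : ∀ ω ω', S ω = S ω' → h ω = h ω') {c : ℝ} (hU : ∀ᵐ ω ∂μ, condMeanOn μ S f ω = c) :
    Integrable (fun x => condVarOn μ S f x / h x) μ :=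
  ((memLp_condMeanOn hS _ 1).integrable le_rfl).congr (condMeanOn_sq_sub_div_ae_eq hS hf hh hU)

lemma integral_sq_sub_div_eq_integral_condVarOn_div [IsFiniteMeasure μ] (hS : Measurable S)
    (hf : AEMeasurable f μ) (hh : ∀ ω ω', S ω = S ω' → h ω = h ω') {c : ℝ}
    (hU : ∀ᵐ ω ∂μ, condMeanOn μ S f ω = c) (hint : Integrable (fun x => (f x - c) ^ 2 / h x) μ) :
    ∫ x, (f x - c) ^ 2 / h x ∂μ = ∫ x, condVarOn μ S f x / h x ∂μ := by
  rw [← integral_condMeanOn hS hint]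
  exact integral_congr_ae (condMeanOn_sq_sub_div_ae_eq hS hf hh hU)

lemma variance_sub_variance_eq_integral_add [IsZeroOrProbabilityMeasure μ] (hS : Measurable S)
    {ε : Ω → ℝ} (hf : MemLp f 2 μ) (hε : MemLp ε 2 μ) {c : ℝ}
    (hU : ∀ᵐ ω ∂μ, condMeanOn μ S ε ω = c) :
    variance f μ - variance ε μ =
      ∫ x, (condVarOn μ S f x - condVarOn μ S ε x) ∂μ + variance (condMeanOn μ S f) μ := by
  rw [variance_eq_integral_condVarOn_add hS hf, variance_eq_integral_condVarOn_add hS hε,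
    variance_eq_zero_of_ae_eq_const hU,
    integral_sub (integrable_condVarOn hS f) (integrable_condVarOn hS ε)]
  ring

lemma cov_sub_cov_eq_integral_add [IsZeroOrProbabilityMeasure μ] (hS : Measurable S)
    {ε ε' : Ω → ℝ} (hf : MemLp f 2 μ) (hg : MemLp g 2 μ) (hε : MemLp ε 2 μ) (hε' : MemLp ε' 2 μ)
    {c : ℝ} (hU : ∀ᵐ ω ∂μ, condMeanOn μ S ε ω = c) :
    cov μ f g - cov μ ε ε' =
      ∫ x, (condCovOn μ S f g x - condCovOn μ S ε ε' x) ∂μ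
        + cov μ (condMeanOn μ S f) (condMeanOn μ S g) := by
  rw [cov_eq_integral_condCovOn_add hS hf hg, cov_eq_integral_condCovOn_add hS hε hε',
    cov_eq_zero_of_ae_eq_const hU,
    integral_sub (integrable_condCovOn hS f g) (integrable_condCovOn hS ε ε')]
  ring

end Strata

theorem stmt_17_general
    {Ω 𝓩 : Type*} [MeasurableSpace Ω]
    [MeasurableSpace 𝓩]
    (P : Measure Ω)
    {J : ℕ} (Z : Ω → 𝓩) (Y : Fin J → Ω → ℝ)
    (hZ : Measurable Z)
    (hY2 : ∀ m, MemLp (Y m) 2 P)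
    (π : Fin J → 𝓩 → ℝ)
    (j k : Fin J)
    (ECE : Set Ω)
    -- stratification: S is a function of Z with finitely many values, and π_j(Z), π_k(Z)
    -- are constant on every level of S
    {𝓢 : Type*} [Fintype 𝓢] [MeasurableSpace 𝓢] [MeasurableSingletonClass 𝓢]
    (S : Ω → 𝓢) (hSZ : ∃ g : 𝓩 → 𝓢, Measurable g ∧ ∀ ω, S ω = g (Z ω))
    (hconstj : ∀ ω ω', S ω = S ω' → π j (Z ω) = π j (Z ω'))
    (hconstk : ∀ ω ω', S ω = S ω' → π k (Z ω) = π k (Z ω'))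
    -- working model: a covariate sub-vector X of W and a function μjk of X
    {𝓧 : Type*}
    (X : Ω → 𝓧)
    (μjk : 𝓧 → ℝ) (hμjk2 : MemLp (fun ω => μjk (X ω)) 2 P)
    (μkj : 𝓧 → ℝ) (hμkj2 : MemLp (fun ω => μkj (X ω)) 2 P)
    -- residuals, δ's, λ's and c_jk
    (εjk εkj : Ω → ℝ)
    (hεjk : ∀ ω, εjk ω = Y j ω - μjk (X ω)) (hεkj : ∀ ω, εkj ω = Y k ω - μkj (X ω))
    (δjk δkj : ℝ)
    (lamjk lamkj : ℝ)
    (hlamjk : lamjk = variance (Y j) P[|ECE] - variance εjk P[|ECE])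
    (hlamkj : lamkj = variance (Y k) P[|ECE] - variance εkj P[|ECE])
    (cjk : ℝ) (hcjk : cjk = cov P[|ECE] (Y j) (Y k) - cov P[|ECE] εjk εkj)
    -- condition (U)
    (hU1 : ∀ᵐ ω ∂P[|ECE], condMeanOn P[|ECE] S εjk ω = δjk)
    (hU2 : ∀ᵐ ω ∂P[|ECE], condMeanOn P[|ECE] S εkj ω = δkj)
    -- finiteness of the displayed conditional moments
    (hIntjε : Integrable (fun ω => (εjk ω - δjk) ^ 2 / π j (Z ω)) P[|ECE])
    (hIntkε : Integrable (fun ω => (εkj ω - δkj) ^ 2 / π k (Z ω)) P[|ECE])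
    -- the matrices
    (Γjk Ssaipw Saps : Matrix (Fin 2) (Fin 2) ℝ)
    (hΓjk : Γjk =
      !![variance (condMeanOn P[|ECE] S (Y j)) P[|ECE],
           cov P[|ECE] (condMeanOn P[|ECE] S (Y j)) (condMeanOn P[|ECE] S (Y k));
         cov P[|ECE] (condMeanOn P[|ECE] S (Y j)) (condMeanOn P[|ECE] S (Y k)),
           variance (condMeanOn P[|ECE] S (Y k)) P[|ECE]])
    (hSsaipw : Ssaipw =
      !![∫ ω, (εjk ω - δjk) ^ 2 / π j (Z ω) ∂P[|ECE], 0;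
         0, ∫ ω, (εkj ω - δkj) ^ 2 / π k (Z ω) ∂P[|ECE]]
      + !![lamjk, cjk; cjk, lamkj])
    (hSaps : Saps =
      !![∫ ω, (condVarOn P[|ECE] S εjk ω / π j (Z ω)
              + (condVarOn P[|ECE] S (Y j) ω - condVarOn P[|ECE] S εjk ω)) ∂P[|ECE],
           ∫ ω, (condCovOn P[|ECE] S (Y j) (Y k) ω - condCovOn P[|ECE] S εjk εkj ω) ∂P[|ECE];
         ∫ ω, (condCovOn P[|ECE] S (Y j) (Y k) ω - condCovOn P[|ECE] S εjk εkj ω) ∂P[|ECE],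
           ∫ ω, (condVarOn P[|ECE] S εkj ω / π k (Z ω)
              + (condVarOn P[|ECE] S (Y k) ω - condVarOn P[|ECE] S εkj ω)) ∂P[|ECE]]
      + Γjk) :
    -- (a)
    (lamjk = (∫ ω, (condVarOn P[|ECE] S (Y j) ω - condVarOn P[|ECE] S εjk ω) ∂P[|ECE])
        + variance (condMeanOn P[|ECE] S (Y j)) P[|ECE]
      ∧ lamkj = (∫ ω, (condVarOn P[|ECE] S (Y k) ω - condVarOn P[|ECE] S εkj ω) ∂P[|ECE])
        + variance (condMeanOn P[|ECE] S (Y k)) P[|ECE])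
    -- (b)
    ∧ cjk = (∫ ω, (condCovOn P[|ECE] S (Y j) (Y k) ω - condCovOn P[|ECE] S εjk εkj ω) ∂P[|ECE])
        + cov P[|ECE] (condMeanOn P[|ECE] S (Y j)) (condMeanOn P[|ECE] S (Y k))
    -- (c)
    ∧ ((∫ ω, (εjk ω - δjk) ^ 2 / π j (Z ω) ∂P[|ECE])
          = ∫ ω, condVarOn P[|ECE] S εjk ω / π j (Z ω) ∂P[|ECE]
      ∧ (∫ ω, (εkj ω - δkj) ^ 2 / π k (Z ω) ∂P[|ECE])
          = ∫ ω, condVarOn P[|ECE] S εkj ω / π k (Z ω) ∂P[|ECE])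
    -- consequently
    ∧ Ssaipw = Saps := by
  obtain ⟨g, hg, hSg⟩ := hSZ
  have hS : Measurable S := by
    rw [show S = g ∘ Z from funext hSg]
    exact hg.comp hZ
  have hYj : MemLp (Y j) 2 P[|ECE] := (hY2 j).cond ECE
  have hYk : MemLp (Y k) 2 P[|ECE] := (hY2 k).cond ECE
  have hεj : MemLp εjk 2 P[|ECE] := by
    rw [show εjk = Y j - fun ω => μjk (X ω) from funext hεjk]
    exact ((hY2 j).sub hμjk2).cond ECE
  have hεk : MemLp εkj 2 P[|ECE] := by
    rw [show εkj = Y k - fun ω => μkj (X ω) from funext hεkj]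
    exact ((hY2 k).sub hμkj2).cond ECE
  have ha₁ := variance_sub_variance_eq_integral_add hS hYj hεj hU1
  have ha₂ := variance_sub_variance_eq_integral_add hS hYk hεk hU2
  have hb := cov_sub_cov_eq_integral_add hS hYj hYk hεj hεk hU1
  have hc₁ := integral_sq_sub_div_eq_integral_condVarOn_div hS hεj.aemeasurable hconstj hU1 hIntjε
  have hc₂ := integral_sq_sub_div_eq_integral_condVarOn_div hS hεk.aemeasurable hconstk hU2 hIntkε
  have hsplit₁ := integral_add (integrable_condVarOn_div hS hεj.aemeasurable hconstj hU1)
    ((integrable_condVarOn hS (Y j)).sub (integrable_condVarOn hS εjk))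
  have hsplit₂ := integral_add (integrable_condVarOn_div hS hεk.aemeasurable hconstk hU2)
    ((integrable_condVarOn hS (Y k)).sub (integrable_condVarOn hS εkj))
  simp only [Pi.sub_apply] at hsplit₁ hsplit₂
  subst hlamjk hlamkj hcjk hSsaipw hSaps hΓjk
  refine ⟨⟨ha₁, ha₂⟩, hb, ⟨hc₁, hc₂⟩, ?_⟩
  ext i i'
  fin_cases i <;> fin_cases i' <;>
    simp only [Fin.zero_eta, Fin.mk_one, Fin.isValue, Matrix.add_apply, Matrix.of_apply,
      Matrix.cons_val', Matrix.cons_val_zero, Matrix.cons_val_one, Matrix.cons_val_fin_one,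
      zero_add] <;>
    linarith

/-- Corollary 6: under condition (U), the λ, c and weighted second-moment
identities hold, and consequently Σ_saipw = Σ_aps. -/
theorem stmt_17
    {Ω 𝓩 𝓦 : Type*} [MeasurableSpace Ω] [StandardBorelSpace Ω]
    [MeasurableSpace 𝓩] [MeasurableSpace 𝓦]
    (P : Measure Ω) [IsProbabilityMeasure P]
    {J : ℕ} (Z : Ω → 𝓩) (W : Ω → 𝓦) (A : Ω → Fin J) (Y : Fin J → Ω → ℝ)
    (hZ : Measurable Z) (hW : Measurable W) (hA : Measurable A)
    (hY : ∀ m, Measurable (Y m)) (hY2 : ∀ m, MemLp (Y m) 2 P)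
    (π : Fin J → 𝓩 → ℝ) (hπmeas : ∀ m, Measurable (π m))
    (hπ01 : ∀ m z, π m z ∈ Set.Icc (0:ℝ) 1)
    (hπsum : ∀ z, ∑ m, π m z = 1)
    -- Assumption 1: A ⟂ (W, Y^(1),…,Y^(J)) given Z
    (hCI : CondIndepFun (MeasurableSpace.comap Z inferInstance) hZ.comap_le A
        (fun ω => (W ω, fun m => Y m ω)) P)
    -- Assumption 1: P(A = m | Z) = π_m(Z) a.s.
    (hprop : ∀ m : Fin J,
      (P[ Set.indicator {ω' | A ω' = m} (fun _ => (1:ℝ)) | MeasurableSpace.comap Z inferInstance])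
        =ᵐ[P] fun ω => π m (Z ω))
    (j k : Fin J) (hjk : j ≠ k)
    -- the ECE event, with positive probability
    (ECE : Set Ω) (hECE : ECE = {ω | 0 < π j (Z ω) ∧ 0 < π k (Z ω)})
    (hECEpos : P ECE ≠ 0)
    -- stratification: S is a function of Z with finitely many values, and π_j(Z), π_k(Z)
    -- are constant on every level of S
    {𝓢 : Type*} [Fintype 𝓢] [MeasurableSpace 𝓢] [MeasurableSingletonClass 𝓢]
    (S : Ω → 𝓢) (hSZ : ∃ g : 𝓩 → 𝓢, Measurable g ∧ ∀ ω, S ω = g (Z ω))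
    (hconstj : ∀ ω ω', S ω = S ω' → π j (Z ω) = π j (Z ω'))
    (hconstk : ∀ ω ω', S ω = S ω' → π k (Z ω) = π k (Z ω'))
    -- working model: a covariate sub-vector X of W and a function μjk of X
    {𝓧 : Type*} [MeasurableSpace 𝓧]
    (X : Ω → 𝓧) (hXW : ∃ g : 𝓦 → 𝓧, Measurable g ∧ ∀ ω, X ω = g (W ω))
    (μjk : 𝓧 → ℝ) (hμjkm : Measurable μjk) (hμjk2 : MemLp (fun ω => μjk (X ω)) 2 P)
    (μkj : 𝓧 → ℝ) (hμkjm : Measurable μkj) (hμkj2 : MemLp (fun ω => μkj (X ω)) 2 P)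
    -- residuals, δ's, λ's and c_jk
    (εjk εkj : Ω → ℝ)
    (hεjk : ∀ ω, εjk ω = Y j ω - μjk (X ω)) (hεkj : ∀ ω, εkj ω = Y k ω - μkj (X ω))
    (δjk δkj : ℝ)
    (hδjk : δjk = ∫ ω, εjk ω ∂P[|ECE]) (hδkj : δkj = ∫ ω, εkj ω ∂P[|ECE])
    (lamjk lamkj : ℝ)
    (hlamjk : lamjk = variance (Y j) P[|ECE] - variance εjk P[|ECE])
    (hlamkj : lamkj = variance (Y k) P[|ECE] - variance εkj P[|ECE])
    (cjk : ℝ) (hcjk : cjk = cov P[|ECE] (Y j) (Y k) - cov P[|ECE] εjk εkj)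
    -- condition (U)
    (hU1 : ∀ᵐ ω ∂P[|ECE], condMeanOn P[|ECE] S εjk ω = δjk)
    (hU2 : ∀ᵐ ω ∂P[|ECE], condMeanOn P[|ECE] S εkj ω = δkj)
    -- finiteness of the displayed conditional moments
    (hIntjε : Integrable (fun ω => (εjk ω - δjk) ^ 2 / π j (Z ω)) P[|ECE])
    (hIntkε : Integrable (fun ω => (εkj ω - δkj) ^ 2 / π k (Z ω)) P[|ECE])
    -- the matrices
    (Γjk Ssaipw Saps : Matrix (Fin 2) (Fin 2) ℝ)
    (hΓjk : Γjk =
      !![variance (condMeanOn P[|ECE] S (Y j)) P[|ECE],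
           cov P[|ECE] (condMeanOn P[|ECE] S (Y j)) (condMeanOn P[|ECE] S (Y k));
         cov P[|ECE] (condMeanOn P[|ECE] S (Y j)) (condMeanOn P[|ECE] S (Y k)),
           variance (condMeanOn P[|ECE] S (Y k)) P[|ECE]])
    (hSsaipw : Ssaipw =
      !![∫ ω, (εjk ω - δjk) ^ 2 / π j (Z ω) ∂P[|ECE], 0;
         0, ∫ ω, (εkj ω - δkj) ^ 2 / π k (Z ω) ∂P[|ECE]]
      + !![lamjk, cjk; cjk, lamkj])
    (hSaps : Saps =
      !![∫ ω, (condVarOn P[|ECE] S εjk ω / π j (Z ω)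
              + (condVarOn P[|ECE] S (Y j) ω - condVarOn P[|ECE] S εjk ω)) ∂P[|ECE],
           ∫ ω, (condCovOn P[|ECE] S (Y j) (Y k) ω - condCovOn P[|ECE] S εjk εkj ω) ∂P[|ECE];
         ∫ ω, (condCovOn P[|ECE] S (Y j) (Y k) ω - condCovOn P[|ECE] S εjk εkj ω) ∂P[|ECE],
           ∫ ω, (condVarOn P[|ECE] S εkj ω / π k (Z ω)
              + (condVarOn P[|ECE] S (Y k) ω - condVarOn P[|ECE] S εkj ω)) ∂P[|ECE]]
      + Γjk) :
    -- (a)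
    (lamjk = (∫ ω, (condVarOn P[|ECE] S (Y j) ω - condVarOn P[|ECE] S εjk ω) ∂P[|ECE])
        + variance (condMeanOn P[|ECE] S (Y j)) P[|ECE]
      ∧ lamkj = (∫ ω, (condVarOn P[|ECE] S (Y k) ω - condVarOn P[|ECE] S εkj ω) ∂P[|ECE])
        + variance (condMeanOn P[|ECE] S (Y k)) P[|ECE])
    -- (b)
    ∧ cjk = (∫ ω, (condCovOn P[|ECE] S (Y j) (Y k) ω - condCovOn P[|ECE] S εjk εkj ω) ∂P[|ECE])
        + cov P[|ECE] (condMeanOn P[|ECE] S (Y j)) (condMeanOn P[|ECE] S (Y k))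
    -- (c)
    ∧ ((∫ ω, (εjk ω - δjk) ^ 2 / π j (Z ω) ∂P[|ECE])
          = ∫ ω, condVarOn P[|ECE] S εjk ω / π j (Z ω) ∂P[|ECE]
      ∧ (∫ ω, (εkj ω - δkj) ^ 2 / π k (Z ω) ∂P[|ECE])
          = ∫ ω, condVarOn P[|ECE] S εkj ω / π k (Z ω) ∂P[|ECE])
    -- consequently
    ∧ Ssaipw = Saps :=
  stmt_17_general P Z Y hZ hY2 π j k ECE S hSZ hconstj hconstk X μjk hμjk2 μkj hμkj2 εjk εkj hεjk
    hεkj δjk δkj lamjk lamkj hlamjk hlamkj cjk hcjk hU1 hU2 hIntjε hIntkε Γjk Ssaipw Saps hΓjk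
    hSsaipw hSaps
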